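/- Let m, d ∈ ℤ and F_m(X, Y) = X⁴ − mX³Y − 6X²Y² + mXY³ + Y⁴. If x', y' ∈ ℤ satisfy gcd(x', y') = 1, both x' and y' odd, and F_m(x', y') = d, then there exists an odd integer c with d = −4c, and the pair x = (x' + y')/2, y = (−x' + y')/2 consists of integers with gcd(x, y) = 1, exactly one of x, y even, and F_m(x, y) = c. -/

import Mathlib

open Polynomial

/-- The simplest quartic polynomial `X^4 - a*X^3 - 6*X^2 + a*X + 1`. -/
noncomputable def simplestQuartic {K : Type*} [Field K] (a : K) : K[X] :=
  X ^ 4 - C a * X ^ 3 - 6 * X ^ 2 + C a * X + 1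

/-- The splitting field of `p` over `K` inside a fixed algebraic closure of `K`. -/
noncomputable def splittingFieldIn (K : Type*) [Field K] (p : K[X]) :
    IntermediateField K (AlgebraicClosure K) :=
  IntermediateField.adjoin K (p.rootSet (AlgebraicClosure K))

/-- The binary quartic form `F_m(x, y) = x^4 - m*x^3*y - 6*x^2*y^2 + m*x*y^3 + y^4`. -/
def Fq (m x y : ℤ) : ℤ := x ^ 4 - m * x ^ 3 * y - 6 * x ^ 2 * y ^ 2 + m * x * y ^ 3 + y ^ 4

/-- `L_m`: the splitting field of the simplest quartic polynomial `f_m` over `ℚ`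
inside a fixed algebraic closure of `ℚ`. -/
noncomputable def Lq (m : ℤ) : IntermediateField ℚ (AlgebraicClosure ℚ) :=
  splittingFieldIn ℚ (simplestQuartic (m : ℚ))

/-!
Writing `x' = x - y` and `y' = x + y`, the form satisfies `F_m(x - y, x + y) = -4 F_m(x, y)`.
Since `x'`, `y'` are odd, `x + y` is odd, so exactly one of `x`, `y` is even and `F_m(x, y)` is
odd; a Bézout relation for `x - y`, `x + y` rearranges into one for `x`, `y`.
-/

theorem Fq_sub_add (m x y : ℤ) : Fq m (x - y) (x + y) = -4 * Fq m x y := by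
  unfold Fq
  ring

theorem Fq_odd_of_odd_add (m : ℤ) {x y : ℤ} (h : Odd (x + y)) : Odd (Fq m x y) := by
  simp only [Fq, Int.odd_add, Int.odd_sub, Int.odd_pow, Int.even_mul, Int.even_pow, ne_eq,
    OfNat.ofNat_ne_zero, not_false_eq_true, or_false, and_true] at h ⊢
  tauto

theorem IsCoprime.of_sub_add {R : Type*} [CommRing R] {x y : R}
    (h : IsCoprime (x - y) (x + y)) : IsCoprime x y := by
  obtain ⟨a, b, hab⟩ := h
  exact ⟨a + b, b - a, by linear_combination hab⟩

theorem Int.even_odd_or_odd_even_of_odd_add {x y : ℤ} (h : Odd (x + y)) :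
    (Even x ∧ Odd y) ∨ (Odd x ∧ Even y) := by
  rcases Int.even_or_odd x with hx | hx
  · exact Or.inl ⟨hx, (Int.odd_add'.mp h).mpr hx⟩
  · exact Or.inr ⟨hx, (Int.odd_add.mp h).mp hx⟩

theorem simplest_quartic_primitive_solution_transform_inverse
    (m d x' y' : ℤ) (hgcd : Int.gcd x' y' = 1) (hx : Odd x') (hy : Odd y')
    (hF : Fq m x' y' = d) :
    ∃ c : ℤ, Odd c ∧ d = -4 * c ∧
      Int.gcd ((x' + y') / 2) ((-x' + y') / 2) = 1 ∧
      ((Even ((x' + y') / 2) ∧ Odd ((-x' + y') / 2)) ∨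
        (Odd ((x' + y') / 2) ∧ Even ((-x' + y') / 2))) ∧
      Fq m ((x' + y') / 2) ((-x' + y') / 2) = c := by
  set x := (x' + y') / 2
  set y := (-x' + y') / 2
  obtain ⟨a, rfl⟩ := hx
  obtain ⟨b, rfl⟩ := hy
  have hsub : x - y = 2 * a + 1 := by omega
  have hadd : x + y = 2 * b + 1 := by omega
  have hodd : Odd (x + y) := hadd ▸ odd_two_mul_add_one b
  rw [← hsub, ← hadd] at hgcd hF
  refine ⟨Fq m x y, Fq_odd_of_odd_add m hodd, by rw [← hF, Fq_sub_add], ?_,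
    Int.even_odd_or_odd_even_of_odd_add hodd, rfl⟩
  exact Int.isCoprime_iff_gcd_eq_one.mp (Int.isCoprime_iff_gcd_eq_one.mpr hgcd).of_sub_add
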